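/- Under DNS, the per-pair objective f_d(x) = α_d·log σ(x) + β_d·log σ(-x) with β_d = c·d (c > 0) is maximized at x_d* = log(α_d/(c·d)); consequently the optimal similarity σ(x_d*) = α_d/(α_d + c·d) is strictly decreasing in d when α_d is constant in d. -/

import Mathlib

noncomputable def sigmoid (x : ℝ) : ℝ := 1 / (1 + Real.exp (-x))

/-!
The per-pair objective is `α log p + β log (1 - p)` in `p = σ(x) ∈ (0, 1)`, a binary cross
entropy. By Gibbs' inequality (the tangent line bound `log t ≤ t - 1` applied to `p / q` and
`(1 - p) / (1 - q)`, whose error terms cancel) it is maximal at `q = α / (α + β)`, and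
`σ (log (α / β)) = α / (α + β)`.
-/

lemma sigmoid_eq_real_sigmoid : sigmoid = Real.sigmoid :=
  funext fun _ => one_div _

lemma Real.sigmoid_log_div {a b : ℝ} (ha : 0 < a) (hb : 0 < b) :
    Real.sigmoid (Real.log (a / b)) = a / (a + b) := by
  rw [Real.sigmoid_def, ← Real.log_inv, Real.exp_log (by positivity), inv_div]
  field_simp

lemma Real.log_le_log_add_div_sub_one {p q : ℝ} (hp : 0 < p) (hq : 0 < q) :
    Real.log p ≤ Real.log q + (p / q - 1) := by
  have h := Real.log_le_sub_one_of_pos (div_pos hp hq)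
  rw [Real.log_div hp.ne' hq.ne'] at h
  linarith

lemma Real.mul_log_add_mul_log_one_sub_le {a b p : ℝ} (ha : 0 < a) (hb : 0 < b)
    (hp₀ : 0 < p) (hp₁ : p < 1) :
    a * Real.log p + b * Real.log (1 - p)
      ≤ a * Real.log (a / (a + b)) + b * Real.log (1 - a / (a + b)) := by
  have hab : 0 < a + b := add_pos ha hb
  have hq₁ : 1 - a / (a + b) = b / (a + b) := by field_simp; ring
  have h₁ := Real.log_le_log_add_div_sub_one hp₀ (div_pos ha hab)
  have h₂ := Real.log_le_log_add_div_sub_one (sub_pos.2 hp₁) (hq₁ ▸ div_pos hb hab)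
  have hcancel : a * (p / (a / (a + b)) - 1) + b * ((1 - p) / (1 - a / (a + b)) - 1) = 0 := by
    rw [hq₁]; field_simp; ring
  linarith [mul_le_mul_of_nonneg_left h₁ ha.le, mul_le_mul_of_nonneg_left h₂ hb.le]

/-- Under DNS, `f_d(x) = α·log σ(x) + c·d·log σ(-x)` (with `β_d = c·d`, `c > 0`,
`α > 0`) is maximized at `x_d* = log (α/(c·d))`, the optimal similarity is
`σ(x_d*) = α/(α + c·d)`, and this is strictly decreasing in `d`. -/
theorem dns_per_pair_optimum (α c : ℝ) (hα : 0 < α) (hc : 0 < c) :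
    (∀ d : ℝ, 0 < d → ∀ x : ℝ,
      α * Real.log (sigmoid x) + c * d * Real.log (sigmoid (-x))
        ≤ α * Real.log (sigmoid (Real.log (α / (c * d))))
          + c * d * Real.log (sigmoid (-(Real.log (α / (c * d)))))) ∧
    (∀ d : ℝ, 0 < d → sigmoid (Real.log (α / (c * d))) = α / (α + c * d)) ∧
    (∀ d₁ d₂ : ℝ, 0 < d₁ → d₁ < d₂ → α / (α + c * d₂) < α / (α + c * d₁)) := by
  rw [sigmoid_eq_real_sigmoid]
  have hoptimum (d : ℝ) (hd : 0 < d) :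
      Real.sigmoid (Real.log (α / (c * d))) = α / (α + c * d) :=
    Real.sigmoid_log_div hα (mul_pos hc hd)
  refine ⟨fun d hd x => ?_, hoptimum, fun d₁ d₂ hd₁ hd => ?_⟩
  · rw [Real.sigmoid_neg, Real.sigmoid_neg, hoptimum d hd]
    exact Real.mul_log_add_mul_log_one_sub_le hα (mul_pos hc hd)
      (Real.sigmoid_pos x) (Real.sigmoid_lt_one x)
  · have : 0 < α + c * d₁ := by positivity
    gcongr
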